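/- Consider the Markov chain on ℝ given by the transition density (for t ≥ 4 fixed, s² = t): p(μ'|μ) ∝ (1 + μ²/t)^{t/2} (1 + μ²/t + μ'²/t)^{−(t+1)/2}. Then E(μ_i² | μ_{i−1} = μ) = (t + μ²)/(t − 2), and with V(μ) := μ² + 1, J := [−a, a] for a > √(t/(t−3)), the drift condition PV(μ) ≤ λV(μ) for |μ| > a and PV(μ) ≤ K for |μ| ≤ a holds with λ = (1/(t−2))((2t−3)/(1+a²) + 1) < 1 and K = 2 + (a²+2)/(t−2). -/

import Mathlib

/-!
Writing `b = 1 + μ²/t`, the kernel is `p(μ'|μ) = f_t(μ'/√b)/√b` with `f_t` the Student-t density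
with `t` degrees of freedom, so `E(μ'² | μ) = b · t/(t-2) = (t + μ²)/(t-2)`. The moments of `f_t`
reduce, after `x ↦ x/√t`, to `J(s) = ∫ (1+x²)^(-s) = √π Γ(s-1/2)/Γ(s)`, which is a Beta integral
under `u = x²/(1+x²)`; the identity `x²(1+x²)^(-s) = (1+x²)^(-(s-1)) - (1+x²)^(-s)` and
`Γ(z+1) = z Γ(z)` then give `∫ x²(1+x²)^(-s) = J(s)/(2s-3)`. The drift inequalities are
elementary algebra in `μ²`.
-/

open MeasureTheory Real

noncomputable section

/-- Normalizing constant of the Student-t type transition density. -/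
def studentC (t : ℝ) : ℝ :=
  Real.Gamma ((t + 1) / 2) / (Real.sqrt (t * Real.pi) * Real.Gamma (t / 2))

/-- The transition density `p(μ'|μ)` of the two-step Gibbs sampler (with `s² = t`):
`p(μ'|μ) ∝ (1 + μ²/t)^{t/2} (1 + μ²/t + μ'²/t)^{−(t+1)/2}`. -/
def pdens (t μ μ' : ℝ) : ℝ :=
  studentC t * (1 + μ ^ 2 / t) ^ (t / 2) * (1 + μ ^ 2 / t + μ' ^ 2 / t) ^ (-(t + 1) / 2)

open Set

theorem integral_Ioo_rpow_mul_one_sub_rpow {a b : ℝ} (ha : 0 < a) (hb : 0 < b) :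
    ∫ u in Ioo (0 : ℝ) 1, u ^ (a - 1) * (1 - u) ^ (b - 1) = Gamma a * Gamma b / Gamma (a + b) := by
  change _ = ProbabilityTheory.beta a b
  rw [ProbabilityTheory.beta_eq_betaIntegralReal a b ha hb, Complex.betaIntegral,
    intervalIntegral.integral_of_le zero_le_one, ← integral_Ioc_eq_integral_Ioo,
    ← RCLike.re_to_complex, ← integral_re]
  · refine setIntegral_congr_fun measurableSet_Ioc fun u ⟨hu0, hu1⟩ ↦ ?_
    norm_cast
    rw [← Complex.ofReal_cpow hu0.le, ← Complex.ofReal_cpow (sub_nonneg.2 hu1),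
      RCLike.re_to_complex, ← Complex.ofReal_mul, Complex.ofReal_re]
  · rw [← IntegrableOn, ← intervalIntegrable_iff_integrableOn_Ioc_of_le zero_le_one]
    exact Complex.betaIntegral_convergent (by simpa) (by simpa)

theorem strictMonoOn_sq_div_one_add_sq :
    StrictMonoOn (fun x : ℝ ↦ x ^ 2 / (1 + x ^ 2)) (Ioi 0) := by
  intro x hx y hy hxy
  simp only
  rw [div_lt_div_iff₀ (by positivity) (by positivity)]
  nlinarith [pow_lt_pow_left₀ hxy (le_of_lt hx) two_ne_zero]

theorem image_sq_div_one_add_sq_Ioi : (fun x : ℝ ↦ x ^ 2 / (1 + x ^ 2)) '' Ioi 0 = Ioo 0 1 := by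
  ext u
  constructor
  · rintro ⟨x, hx, rfl⟩
    exact ⟨by have := mem_Ioi.1 hx; positivity, (div_lt_one (by positivity)).2 (by linarith)⟩
  · rintro ⟨hu0, hu1⟩
    have hv : 0 < u / (1 - u) := div_pos hu0 (by linarith)
    refine ⟨√(u / (1 - u)), sqrt_pos.2 hv, ?_⟩
    have : 1 - u ≠ 0 := by linarith
    simp only [sq_sqrt hv.le]
    field_simp
    ring

theorem hasDerivAt_sq_div_one_add_sq (x : ℝ) :
    HasDerivAt (fun x : ℝ ↦ x ^ 2 / (1 + x ^ 2)) (2 * x / (1 + x ^ 2) ^ 2) x := by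
  have h := (hasDerivAt_pow 2 x).div ((hasDerivAt_pow 2 x).const_add 1) (by positivity)
  refine h.congr_deriv ?_
  field_simp
  ring

theorem integral_Ioi_one_add_sq_rpow_neg {s : ℝ} (hs : 1 / 2 < s) :
    ∫ x in Ioi (0 : ℝ), (1 + x ^ 2) ^ (-s) = Gamma (1 / 2) * Gamma (s - 1 / 2) / Gamma s / 2 := by
  have hchange := integral_image_eq_integral_abs_deriv_smul measurableSet_Ioi
    (fun x _ ↦ (hasDerivAt_sq_div_one_add_sq x).hasDerivWithinAt)
    strictMonoOn_sq_div_one_add_sq.injOn (fun u ↦ u ^ ((1 : ℝ) / 2 - 1) * (1 - u) ^ (s - 1 / 2 - 1))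
  rw [image_sq_div_one_add_sq_Ioi, integral_Ioo_rpow_mul_one_sub_rpow (by norm_num) (by linarith),
    add_sub_cancel] at hchange
  rw [hchange, eq_div_iff two_ne_zero, ← integral_mul_const]
  refine setIntegral_congr_fun measurableSet_Ioi fun x hx ↦ ?_
  have hx : 0 < x := hx
  have hP : 0 < 1 + x ^ 2 := by positivity
  have h1 : (x ^ 2 / (1 + x ^ 2)) ^ ((1 : ℝ) / 2 - 1) = x⁻¹ / (1 + x ^ 2) ^ ((1 : ℝ) / 2 - 1) := by
    rw [div_rpow (by positivity) hP.le, ← rpow_natCast, ← rpow_mul hx.le]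
    norm_num [rpow_neg_one]
  have h2 : (1 - x ^ 2 / (1 + x ^ 2)) ^ (s - 1 / 2 - 1)
      = (1 + x ^ 2) ^ ((1 : ℝ) / 2 - 1) * (1 + x ^ 2) ^ 2 * (1 + x ^ 2) ^ (-s) := by
    rw [show 1 - x ^ 2 / (1 + x ^ 2) = (1 + x ^ 2)⁻¹ by field_simp; ring, inv_rpow hP.le,
      ← rpow_neg hP.le, ← rpow_two (1 + x ^ 2), ← rpow_add hP, ← rpow_add hP]
    ring_nf
  rw [smul_eq_mul, abs_of_pos (by positivity), h1, h2]
  field_simp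

theorem integral_one_add_sq_rpow_neg {s : ℝ} (hs : 1 / 2 < s) :
    ∫ x : ℝ, (1 + x ^ 2) ^ (-s) = √π * Gamma (s - 1 / 2) / Gamma s := by
  have h := integral_comp_abs (f := fun x : ℝ ↦ (1 + x ^ 2) ^ (-s))
  simp only [sq_abs] at h
  rw [h, integral_Ioi_one_add_sq_rpow_neg hs, Gamma_one_half_eq]
  ring

theorem integrable_one_add_sq_rpow_neg {s : ℝ} (hs : 1 / 2 < s) :
    Integrable fun x : ℝ ↦ (1 + x ^ 2) ^ (-s) := by
  have h := integrable_rpow_neg_one_add_norm_sq (E := ℝ) (μ := volume) (r := 2 * s)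
    (by simp only [Module.finrank_self, Nat.cast_one]; linarith)
  simpa [neg_div] using h

theorem sq_mul_one_add_sq_rpow_neg (s x : ℝ) :
    x ^ 2 * (1 + x ^ 2) ^ (-s) = (1 + x ^ 2) ^ (-(s - 1)) - (1 + x ^ 2) ^ (-s) := by
  rw [show -(s - 1) = 1 + -s by ring, rpow_add (by positivity), rpow_one]
  ring

theorem integral_sq_mul_one_add_sq_rpow_neg {s : ℝ} (hs : 3 / 2 < s) :
    ∫ x : ℝ, x ^ 2 * (1 + x ^ 2) ^ (-s) = (∫ x : ℝ, (1 + x ^ 2) ^ (-s)) / (2 * s - 3) := by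
  simp only [sq_mul_one_add_sq_rpow_neg]
  rw [integral_sub (integrable_one_add_sq_rpow_neg (by linarith))
    (integrable_one_add_sq_rpow_neg (by linarith)), integral_one_add_sq_rpow_neg (by linarith),
    integral_one_add_sq_rpow_neg (by linarith)]
  have hΓ₁ : Gamma (s - 1 / 2) = (2 * s - 3) / 2 * Gamma (s - 1 - 1 / 2) := by
    rw [show s - 1 / 2 = s - 1 - 1 / 2 + 1 by ring, Gamma_add_one (by linarith)]
    ring
  have hΓ₂ : Gamma s = (s - 1) * Gamma (s - 1) := by
    rw [← Gamma_add_one (by linarith), sub_add_cancel]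
  have : 0 < Gamma (s - 1) := Gamma_pos_of_pos (by linarith)
  have : s - 1 ≠ 0 := by linarith
  rw [hΓ₁, hΓ₂]
  field_simp
  rw [mul_div_assoc, div_self (by linarith)]
  ring

theorem integral_comp_div_div (f : ℝ → ℝ) {c : ℝ} (hc : 0 < c) :
    ∫ x, f (x / c) / c = ∫ x, f x := by
  rw [integral_div, Measure.integral_comp_div f c, abs_of_pos hc, smul_eq_mul,
    mul_div_cancel_left₀ _ hc.ne']

theorem integral_sq_mul_comp_div_div (f : ℝ → ℝ) {c : ℝ} (hc : 0 < c) :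
    ∫ x, x ^ 2 * (f (x / c) / c) = c ^ 2 * ∫ x, x ^ 2 * f x := by
  rw [← integral_comp_div_div (fun x ↦ x ^ 2 * f x) hc, ← integral_const_mul]
  congr 1 with x
  field_simp

def studentTPDFReal (t x : ℝ) : ℝ :=
  studentC t * (1 + x ^ 2 / t) ^ (-(t + 1) / 2)

section StudentT

variable {t : ℝ}

theorem studentTPDFReal_eq_rescaled (ht : 0 < t) (x : ℝ) :
    studentTPDFReal t x = studentC t * (1 + (x / √t) ^ 2) ^ (-((t + 1) / 2)) := by
  rw [studentTPDFReal, div_pow, sq_sqrt ht.le, neg_div]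

theorem studentC_mul_sqrt_mul_integral (ht : 0 < t) :
    studentC t * (√t * ∫ x : ℝ, (1 + x ^ 2) ^ (-((t + 1) / 2))) = 1 := by
  rw [integral_one_add_sq_rpow_neg (by linarith), studentC, sqrt_mul ht.le,
    show (t + 1) / 2 - 1 / 2 = t / 2 by ring]
  have : 0 < Gamma ((t + 1) / 2) := Gamma_pos_of_pos (by linarith)
  have : 0 < Gamma (t / 2) := Gamma_pos_of_pos (by linarith)
  have : 0 < √t := sqrt_pos.2 ht
  have : 0 < √π := sqrt_pos.2 pi_pos
  field_simp

theorem integral_studentTPDFReal (ht : 0 < t) : ∫ x, studentTPDFReal t x = 1 := by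
  simp_rw [studentTPDFReal_eq_rescaled ht]
  rw [integral_const_mul, Measure.integral_comp_div (fun y : ℝ ↦ (1 + y ^ 2) ^ (-((t + 1) / 2))),
    abs_of_pos (sqrt_pos.2 ht), smul_eq_mul, studentC_mul_sqrt_mul_integral ht]

theorem integral_sq_mul_studentTPDFReal (ht : 2 < t) :
    ∫ x, x ^ 2 * studentTPDFReal t x = t / (t - 2) := by
  have ht0 : 0 < t := by linarith
  have hsqrt : 0 < √t := sqrt_pos.2 ht0
  have hx : ∀ x, x ^ 2 * studentTPDFReal t x
      = studentC t * t * ((x / √t) ^ 2 * (1 + (x / √t) ^ 2) ^ (-((t + 1) / 2))) := by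
    intro x
    rw [studentTPDFReal_eq_rescaled ht0, div_pow, sq_sqrt ht0.le]
    field_simp
  simp_rw [hx]
  rw [integral_const_mul,
    Measure.integral_comp_div (fun y : ℝ ↦ y ^ 2 * (1 + y ^ 2) ^ (-((t + 1) / 2))),
    abs_of_pos hsqrt, smul_eq_mul, integral_sq_mul_one_add_sq_rpow_neg (by linarith),
    show 2 * ((t + 1) / 2) - 3 = t - 2 by ring]
  linear_combination t / (t - 2) * studentC_mul_sqrt_mul_integral ht0

end StudentT

section GibbsKernel

variable {t : ℝ}

theorem pdens_eq_studentTPDFReal (ht : 0 < t) (μ μ' : ℝ) :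
    pdens t μ μ' = studentTPDFReal t (μ' / √(1 + μ ^ 2 / t)) / √(1 + μ ^ 2 / t) := by
  set b := 1 + μ ^ 2 / t
  have hb : 0 < b := by positivity
  have hsplit : b + μ' ^ 2 / t = b * (1 + (μ' / √b) ^ 2 / t) := by
    rw [div_pow, sq_sqrt hb.le]
    field_simp
  have hpow : b ^ (t / 2) * b ^ (-(t + 1) / 2) = (√b)⁻¹ := by
    rw [← rpow_add hb, show t / 2 + -(t + 1) / 2 = -(1 / 2) by ring, rpow_neg hb.le,
      sqrt_eq_rpow]
  rw [pdens, studentTPDFReal, hsplit, mul_rpow hb.le (by positivity),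
    div_eq_mul_inv (studentC t * _), ← hpow]
  ring

theorem integral_pdens (ht : 0 < t) (μ : ℝ) : ∫ μ', pdens t μ μ' = 1 := by
  simp_rw [pdens_eq_studentTPDFReal ht]
  rw [integral_comp_div_div _ (sqrt_pos.2 (by positivity)), integral_studentTPDFReal ht]

theorem integral_sq_mul_pdens (ht : 2 < t) (μ : ℝ) :
    ∫ μ', μ' ^ 2 * pdens t μ μ' = (t + μ ^ 2) / (t - 2) := by
  have ht0 : 0 < t := by linarith
  simp_rw [pdens_eq_studentTPDFReal ht0]
  rw [integral_sq_mul_comp_div_div _ (sqrt_pos.2 (by positivity)),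
    integral_sq_mul_studentTPDFReal ht, sq_sqrt (by positivity)]
  field_simp

theorem integral_sq_add_one_mul_pdens (ht : 2 < t) (μ : ℝ) :
    ∫ μ', (μ' ^ 2 + 1) * pdens t μ μ' = (t + μ ^ 2) / (t - 2) + 1 := by
  have ht2 : 0 < t - 2 := by linarith
  have hsq := integral_sq_mul_pdens ht μ
  have hone := integral_pdens (by linarith : 0 < t) μ
  simp_rw [add_mul, one_mul]
  rw [integral_add (.of_integral_ne_zero (by rw [hsq]; positivity))
    (.of_integral_ne_zero (by rw [hone]; exact one_ne_zero)), hsq, hone]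

end GibbsKernel

section DriftConstants

variable {t a μ : ℝ}

theorem drift_rate_lt_one (ht : 3 < t) (ha : t / (t - 3) < a ^ 2) :
    1 / (t - 2) * ((2 * t - 3) / (1 + a ^ 2) + 1) < 1 := by
  have hta : t < a ^ 2 * (t - 3) := (div_lt_iff₀ (by linarith)).1 ha
  rw [one_div_mul_eq_div, div_lt_one (by linarith), ← lt_sub_iff_add_lt,
    div_lt_iff₀ (by positivity)]
  linarith

theorem drift_outside_small_set (ht : 2 < t) (hμ : a ^ 2 ≤ μ ^ 2) :
    (t + μ ^ 2) / (t - 2) + 1 ≤ 1 / (t - 2) * ((2 * t - 3) / (1 + a ^ 2) + 1) * (μ ^ 2 + 1) := by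
  have ht2 : t - 2 ≠ 0 := by linarith
  rw [← sub_nonneg, show 1 / (t - 2) * ((2 * t - 3) / (1 + a ^ 2) + 1) * (μ ^ 2 + 1)
      - ((t + μ ^ 2) / (t - 2) + 1) = (2 * t - 3) * (μ ^ 2 - a ^ 2) / ((t - 2) * (1 + a ^ 2)) by
    field_simp; ring]
  exact div_nonneg (mul_nonneg (by linarith) (by linarith))
    (mul_nonneg (by linarith) (by positivity))

theorem drift_inside_small_set (ht : 2 < t) (hμ : μ ^ 2 ≤ a ^ 2) :
    (t + μ ^ 2) / (t - 2) + 1 ≤ 2 + (a ^ 2 + 2) / (t - 2) := by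
  have ht2 : 0 < t - 2 := by linarith
  calc (t + μ ^ 2) / (t - 2) + 1 ≤ (t + a ^ 2) / (t - 2) + 1 := by gcongr
    _ = 2 + (a ^ 2 + 2) / (t - 2) := by field_simp; ring

end DriftConstants

theorem student_gibbs_drift (t a : ℝ) (ht : 4 ≤ t)
    (ha : Real.sqrt (t / (t - 3)) < a) :
    (∀ μ : ℝ, ∫ μ', μ' ^ 2 * pdens t μ μ' = (t + μ ^ 2) / (t - 2))
    ∧ (1 / (t - 2)) * ((2 * t - 3) / (1 + a ^ 2) + 1) < 1
    ∧ (∀ μ : ℝ, a < |μ| →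
        ∫ μ', (μ' ^ 2 + 1) * pdens t μ μ'
          ≤ ((1 / (t - 2)) * ((2 * t - 3) / (1 + a ^ 2) + 1)) * (μ ^ 2 + 1))
    ∧ (∀ μ : ℝ, |μ| ≤ a →
        ∫ μ', (μ' ^ 2 + 1) * pdens t μ μ' ≤ 2 + (a ^ 2 + 2) / (t - 2)) := by
  have ht2 : 2 < t := by linarith
  have ha0 : 0 < a := (sqrt_nonneg _).trans_lt ha
  refine ⟨integral_sq_mul_pdens ht2, drift_rate_lt_one (by linarith) ((sqrt_lt' ha0).1 ha),
    fun μ hμ ↦ ?_, fun μ hμ ↦ ?_⟩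
  · rw [integral_sq_add_one_mul_pdens ht2]
    exact drift_outside_small_set ht2 (sq_le_sq.2 (by rw [abs_of_pos ha0]; exact hμ.le))
  · rw [integral_sq_add_one_mul_pdens ht2]
    exact drift_inside_small_set ht2 (sq_le_sq.2 (by rwa [abs_of_pos ha0]))

end
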